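/- Let G=(V,E) be a finite simple connected graph that is not a complete graph, and let K be a field. Then the cut ideal I_G has a minimal generator of degree 2; more precisely, the degree-1 homogeneous component of I_G is zero while the degree-2 homogeneous component of I_G is nonzero. -/

import Mathlib

/-!
In degree one, `φ_G` sends the variables `q_{A|Aᶜ}` to the monomials `u_A`. On a connected graph
the cut set determines `A` up to complement (if `A` and `B` cut the same edges, then
`x ∈ A ↔ x ∈ B` has the same truth value at both ends of every edge, hence at every vertex),
so these are pairwise distinct monomials, hence linearly independent, and no nonzero linear
form lies in `I_G`. In degree two, pick non-adjacent vertices `u ≠ v`: no edge is cut by both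
`{u}` and `{v}`, and `Cut({u, v}) = Cut({u}) ∪ Cut({v})`, so `q_{u} q_{v} - q_{u,v} q_∅` is a
nonzero element of `I_G`.
-/

open scoped Classical

noncomputable section

namespace CutPaper

open MvPolynomial

/-- An edge `e` is cut by the partition `A | Aᶜ` if it has exactly one endpoint in `A`. -/
def IsCutEdge {V : Type} (A : Set V) (e : Sym2 V) : Prop :=
  ∃ u v : V, e = s(u, v) ∧ u ∈ A ∧ v ∉ A

/-- The cut set of `A`: all edges of `G` with exactly one endpoint in `A`. -/
def cutSet {V : Type} (G : SimpleGraph V) (A : Set V) : Set (Sym2 V) :=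
  {e ∈ G.edgeSet | IsCutEdge A e}

lemma isCutEdge_compl {V : Type} (A : Set V) (e : Sym2 V) :
    IsCutEdge Aᶜ e ↔ IsCutEdge A e := by
  constructor <;> rintro ⟨u, v, rfl, hu, hv⟩
  · exact ⟨v, u, Sym2.eq_swap, Set.notMem_compl_iff.mp hv, hu⟩
  · exact ⟨v, u, Sym2.eq_swap, hv, not_not_intro hu⟩

/-- Two subsets determine the same unordered partition `A | Aᶜ` of `V`
iff they are equal or complementary. -/
def partitionSetoid (V : Type) : Setoid (Set V) where
  r A B := B = A ∨ B = Aᶜ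
  iseqv := by
    refine ⟨fun A => Or.inl rfl, @fun A B h => ?_, @fun A B C h1 h2 => ?_⟩
    · rcases h with rfl | rfl
      · exact Or.inl rfl
      · exact Or.inr (compl_compl A).symm
    · rcases h1 with rfl | rfl <;> rcases h2 with rfl | rfl
      · exact Or.inl rfl
      · exact Or.inr rfl
      · exact Or.inr rfl
      · exact Or.inl (compl_compl A)

/-- The unordered partitions `A | Aᶜ` of `V`, indexing the variables of `S_G`. -/
abbrev Partition (V : Type) := Quotient (partitionSetoid V)

variable (K : Type) [CommRing K]

/-- The variable `q_{A|Aᶜ}` of the polynomial ring `S_G`. -/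
def qPart {V : Type} (A : Set V) : MvPolynomial (Partition V) K :=
  X (Quotient.mk (partitionSetoid V) A)

/-- The monomial `u_A = ∏_{e ∈ Cut(A)} s_e · ∏_{e ∈ E \ Cut(A)} t_e`;
the variable `s_e` is `X (true, e)` and `t_e` is `X (false, e)`. -/
def cutMonomial {V : Type} [Finite V] (G : SimpleGraph V) (A : Set V) :
    MvPolynomial (Bool × Sym2 V) K :=
  ∏ e ∈ (Set.toFinite G.edgeSet).toFinset,
    if IsCutEdge A e then X (true, e) else X (false, e)

lemma cutMonomial_compl {V : Type} [Finite V] (G : SimpleGraph V) (A : Set V) :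
    cutMonomial K G Aᶜ = cutMonomial K G A := by
  unfold cutMonomial
  refine Finset.prod_congr rfl fun e _ => ?_
  by_cases h : IsCutEdge A e
  · rw [if_pos ((isCutEdge_compl A e).mpr h), if_pos h]
  · rw [if_neg fun hc => h ((isCutEdge_compl A e).mp hc), if_neg h]

/-- The `K`-algebra homomorphism `φ_G : S_G → R_G`, `q_{A|Aᶜ} ↦ u_A`. -/
def phi {V : Type} [Finite V] (G : SimpleGraph V) :
    MvPolynomial (Partition V) K →ₐ[K] MvPolynomial (Bool × Sym2 V) K :=
  aeval fun p : Partition V =>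
    Quotient.lift (cutMonomial K G)
      (fun A B hAB => by
        have h : B = A ∨ B = Aᶜ := hAB
        rcases h with rfl | rfl
        · rfl
        · exact (cutMonomial_compl K G A).symm) p

/-- The cut ideal `I_G = ker φ_G`. -/
def cutIdeal {V : Type} [Finite V] (G : SimpleGraph V) :
    Ideal (MvPolynomial (Partition V) K) :=
  RingHom.ker (phi K G)

/-- The cut algebra `K[G]`, i.e. the image of `φ_G`: the `K`-subalgebra of `R_G`
generated by the monomials `u_A`. -/
def cutAlgebra {V : Type} [Finite V] (G : SimpleGraph V) :
    Subalgebra K (MvPolynomial (Bool × Sym2 V) K) :=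
  Algebra.adjoin K {m | ∃ A : Set V, m = cutMonomial K G A}

/-- The generator `u_A` of the cut algebra, as an element of the cut algebra. -/
def uGen {V : Type} [Finite V] (G : SimpleGraph V) (A : Set V) : ↥(cutAlgebra K G) :=
  ⟨cutMonomial K G A, Algebra.subset_adjoin ⟨A, rfl⟩⟩

/-- An element of `S_G/I` is homogeneous of degree `d` if it is the class of a homogeneous
polynomial of degree `d`. -/
def QuotHomogeneous {σ : Type} (I : Ideal (MvPolynomial σ K)) (d : ℕ)
    (x : MvPolynomial σ K ⧸ I) : Prop :=
  ∃ f : MvPolynomial σ K, f.IsHomogeneous d ∧ Ideal.Quotient.mk I f = x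

/-- The cut algebra of `H` is an algebra retract of the cut algebra of `G`:
there are homogeneous `K`-algebra homomorphisms `ι : K[H] → K[G]` (injective) and
`π : K[G] → K[H]` with `π ∘ ι = id`. -/
def CutAlgebraRetract {V W : Type} [Finite V] [Finite W]
    (H : SimpleGraph W) (G : SimpleGraph V) : Prop :=
  ∃ (ι : (MvPolynomial (Partition W) K ⧸ cutIdeal K H) →ₐ[K]
      (MvPolynomial (Partition V) K ⧸ cutIdeal K G))
    (π : (MvPolynomial (Partition V) K ⧸ cutIdeal K G) →ₐ[K]
      (MvPolynomial (Partition W) K ⧸ cutIdeal K H)),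
    Function.Injective ι ∧
    (∀ d x, QuotHomogeneous K (cutIdeal K H) d x →
      ∃ d', QuotHomogeneous K (cutIdeal K G) d' (ι x)) ∧
    (∀ d x, QuotHomogeneous K (cutIdeal K G) d x →
      ∃ d', QuotHomogeneous K (cutIdeal K H) d' (π x)) ∧
    π.comp ι = AlgHom.id K _

/-- The graph obtained from `G` by contracting the edge `{u, v}`: the vertex `u` is removed
and merged into `v`. -/
def contractEdge {V : Type} (G : SimpleGraph V) (u v : V) :
    SimpleGraph {x : V // x ≠ u} where
  Adj a b := a ≠ b ∧
    (G.Adj a b ∨ ((a : V) = v ∧ G.Adj u b) ∨ ((b : V) = v ∧ G.Adj a u))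
  symm := by
    refine ⟨?_⟩
    rintro a b ⟨hne, h | ⟨ha, h⟩ | ⟨hb, h⟩⟩
    · exact ⟨hne.symm, Or.inl h.symm⟩
    · exact ⟨hne.symm, Or.inr (Or.inr ⟨ha, h.symm⟩)⟩
    · exact ⟨hne.symm, Or.inr (Or.inl ⟨hb, h.symm⟩)⟩
  loopless := ⟨fun a h => h.1 rfl⟩

/-- The induced subgraph `G_W` is a neighborhood-minor of `G`: `W` and `W' = Wᶜ` are nonempty
and there is a vertex `v ∈ W` with `W ∩ N_G(W') ⊆ N_{G_W}[v]`. -/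
def IsNeighborhoodMinor {V : Type} (G : SimpleGraph V) (W : Set V) : Prop :=
  W.Nonempty ∧ Wᶜ.Nonempty ∧
    ∃ v ∈ W, ∀ x ∈ W, (∃ y ∈ Wᶜ, G.Adj y x) → x = v ∨ G.Adj v x

/-- The cut vector `δ_A ∈ {0,1}^E` of the partition `A | Aᶜ`. -/
def cutVector {V : Type} (G : SimpleGraph V) (A : Set V) : ↥G.edgeSet → ℝ :=
  fun e => if IsCutEdge A (e : Sym2 V) then 1 else 0

/-- The cut polytope `Cut^□(G) ⊆ ℝ^E`: the convex hull of the cut vectors. -/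
def cutPolytope {V : Type} (G : SimpleGraph V) : Set (↥G.edgeSet → ℝ) :=
  convexHull ℝ {x | ∃ A : Set V, x = cutVector G A}

/-- `F` is a face of `P`: either a trivial face (`P` or `∅`), or the intersection of `P`
with a supporting hyperplane. -/
def IsFace {α : Type} (P F : Set (α → ℝ)) : Prop :=
  F = P ∨ F = ∅ ∨
    ∃ (φ : (α → ℝ) →ₗ[ℝ] ℝ) (c : ℝ), φ ≠ 0 ∧
      (∀ x ∈ P, φ x ≤ c) ∧ F = P ∩ {x | φ x = c}

/-- `P` and `Q` are affinely isomorphic: there is a bijective map from `P` onto `Q`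
extending to an affine map. -/
def AffinelyIsomorphic {α β : Type} (P : Set (α → ℝ)) (Q : Set (β → ℝ)) : Prop :=
  ∃ f : (α → ℝ) →ᵃ[ℝ] (β → ℝ), Set.InjOn f P ∧ f '' P = Q

/-- The monomial `z · ∏_{e ∈ Cut(A)} y_e` of the polytopal algebra of the cut polytope;
the variable `z` is `X none` and `y_e` is `X (some e)`. -/
def polytopeMonomial {V : Type} [Finite V] (G : SimpleGraph V) (A : Set V) :
    MvPolynomial (Option (Sym2 V)) K :=
  X none * ∏ e ∈ (Set.toFinite (cutSet G A)).toFinset, X (some e)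

/-- The polytopal algebra `K[Cut^□(G)]`: the subalgebra of `K[y_e (e ∈ E), z]` generated by
the monomials `z · y^{δ_A}` attached to the lattice points (= cut vectors) of `Cut^□(G)`. -/
def polytopalAlgebra {V : Type} [Finite V] (G : SimpleGraph V) :
    Subalgebra K (MvPolynomial (Option (Sym2 V)) K) :=
  Algebra.adjoin K {m | ∃ A : Set V, m = polytopeMonomial K G A}

/-- `G'` is a combinatorial retract of `G`: it is obtained from `G` by a finite sequence of
edge contractions and neighborhood-minors. -/
inductive CombinatorialRetract : ∀ {V W : Type}, SimpleGraph V → SimpleGraph W → Prop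
  | refl {V : Type} (G : SimpleGraph V) : CombinatorialRetract G G
  | contract {V W : Type} (G : SimpleGraph V) (u v : V) (huv : G.Adj u v)
      (G' : SimpleGraph W) (h : CombinatorialRetract (contractEdge G u v) G') :
      CombinatorialRetract G G'
  | nbhdMinor {V W : Type} (G : SimpleGraph V) (S : Set V)
      (hS : IsNeighborhoodMinor G S) (G' : SimpleGraph W)
      (h : CombinatorialRetract (SimpleGraph.induce S G) G') :
      CombinatorialRetract G G'

lemma isCutEdge_mk_iff {V : Type} (A : Set V) (x y : V) :
    IsCutEdge A s(x, y) ↔ (x ∈ A ↔ y ∉ A) := by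
  simp only [IsCutEdge, Sym2.eq_iff]
  constructor
  · rintro ⟨a, b, ⟨rfl, rfl⟩ | ⟨rfl, rfl⟩, ha, hb⟩ <;> tauto
  · intro h
    by_cases hx : x ∈ A
    · exact ⟨x, y, Or.inl ⟨rfl, rfl⟩, hx, h.mp hx⟩
    · exact ⟨y, x, Or.inr ⟨rfl, rfl⟩, not_not.mp (mt h.mpr hx), hx⟩

lemma not_isCutEdge_empty {V : Type} (e : Sym2 V) : ¬IsCutEdge ∅ e := by
  rintro ⟨u, v, -, hu, -⟩
  exact hu

theorem _root_.SimpleGraph.Reachable.eq_of_forall_adj {V α : Type} {G : SimpleGraph V}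
    (f : V → α) (hf : ∀ x y, G.Adj x y → f x = f y) {x y : V} (h : G.Reachable x y) :
    f x = f y := by
  obtain ⟨w⟩ := h
  induction w with
  | nil => rfl
  | cons hadj _ ih => exact (hf _ _ hadj).trans ih

theorem eq_or_eq_compl_of_isCutEdge_iff {V : Type} {G : SimpleGraph V} (hG : G.Preconnected)
    {A B : Set V} (h : ∀ e ∈ G.edgeSet, IsCutEdge A e ↔ IsCutEdge B e) :
    B = A ∨ B = Aᶜ := by
  have agree_const : ∀ x y, (x ∈ A ↔ x ∈ B) = (y ∈ A ↔ y ∈ B) := by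
    refine fun x y => (hG x y).eq_of_forall_adj (fun z => (z ∈ A ↔ z ∈ B)) ?_
    intro x y hxy
    have := h s(x, y) hxy
    rw [isCutEdge_mk_iff, isCutEdge_mk_iff] at this
    exact propext (by tauto)
  by_cases hagree : ∀ x, x ∈ A ↔ x ∈ B
  · exact Or.inl (Set.ext fun x => (hagree x).symm)
  · obtain ⟨x₀, hx₀⟩ := not_forall.mp hagree
    refine Or.inr (Set.ext fun y => ?_)
    have := agree_const x₀ y
    rw [Set.mem_compl_iff]
    by_cases hy : y ∈ A <;> by_cases hy' : y ∈ B <;> simp_all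

def cutExponent {V : Type} [Finite V] (G : SimpleGraph V) (A : Set V) : Bool × Sym2 V →₀ ℕ :=
  ∑ e ∈ (Set.toFinite G.edgeSet).toFinset, Finsupp.single (decide (IsCutEdge A e), e) 1

lemma cutMonomial_eq_monomial {V : Type} [Finite V] (G : SimpleGraph V) (A : Set V) :
    cutMonomial K G A = monomial (cutExponent G A) 1 := by
  rw [cutExponent, monomial_sum_one]
  refine Finset.prod_congr rfl fun e _ => ?_
  by_cases h : IsCutEdge A e <;> simp [h, X]

lemma cutExponent_apply_true {V : Type} [Finite V] (G : SimpleGraph V) (A : Set V)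
    (e : Sym2 V) :
    cutExponent G A (true, e) = if e ∈ G.edgeSet ∧ IsCutEdge A e then 1 else 0 := by
  rw [cutExponent, Finsupp.finsetSum_apply]
  simp only [Finsupp.single_apply, Prod.mk.injEq, decide_eq_true_iff]
  simp_rw [@and_comm (IsCutEdge A _), ite_and, Finset.sum_ite_eq', Set.Finite.mem_toFinset]

lemma isCutEdge_iff_of_cutExponent_eq {V : Type} [Finite V] {G : SimpleGraph V}
    {A B : Set V} (h : cutExponent G A = cutExponent G B) :
    ∀ e ∈ G.edgeSet, IsCutEdge A e ↔ IsCutEdge B e := by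
  intro e he
  have := DFunLike.congr_fun h (true, e)
  rw [cutExponent_apply_true, cutExponent_apply_true] at this
  by_cases hA : IsCutEdge A e <;> by_cases hB : IsCutEdge B e <;> simp_all

lemma phi_X_mk {V : Type} [Finite V] (G : SimpleGraph V) (A : Set V) :
    phi K G (X ⟦A⟧) = cutMonomial K G A := by
  simp [phi]

lemma phi_qPart {V : Type} [Finite V] (G : SimpleGraph V) (A : Set V) :
    phi K G (qPart K A) = cutMonomial K G A :=
  phi_X_mk K G A

theorem linearIndependent_phi_X {V : Type} [Finite V] {G : SimpleGraph V}
    (hG : G.Preconnected) :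
    LinearIndependent K fun p : Partition V => phi K G (X p) := by
  have hphi : (fun p : Partition V => phi K G (X p)) =
      (fun d => monomial d (1 : K)) ∘ fun p => cutExponent G p.out := by
    ext1 p
    conv_lhs => rw [← Quotient.out_eq p]
    rw [Function.comp_apply, ← cutMonomial_eq_monomial]
    exact phi_X_mk K G p.out
  rw [hphi, ← coe_basisMonomials]
  refine (basisMonomials _ K).linearIndependent.comp _ fun p q hpq => ?_
  exact Quotient.out_equiv_out.mp
    (eq_or_eq_compl_of_isCutEdge_iff hG (isCutEdge_iff_of_cutExponent_eq hpq))

theorem _root_.MvPolynomial.eq_zero_of_isHomogeneous_one_of_linearIndependent {σ R S : Type}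
    [CommRing R] [Ring S] [Algebra R S] (φ : MvPolynomial σ R →ₐ[R] S)
    (hφ : LinearIndependent R fun i => φ (X i)) {f : MvPolynomial σ R}
    (hf : f.IsHomogeneous 1) (h : φ f = 0) : f = 0 := by
  have hf' : f ∈ Submodule.span R (Set.range X) := by
    rw [← homogeneousSubmodule_one_eq_span_X]
    exact hf
  obtain ⟨c, rfl⟩ := Finsupp.mem_span_range_iff_exists_finsupp.mp hf'
  have hc : c = 0 := by
    refine linearIndependent_iff.mp hφ c ?_
    rw [← h, map_finsuppSum, Finsupp.linearCombination_apply]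
    simp only [map_smul]
  simp [hc]

lemma cutMonomial_mul_of_disjoint {V : Type} [Finite V] (G : SimpleGraph V) {A B : Set V}
    (hAB : Disjoint A B) (hadj : ∀ a ∈ A, ∀ b ∈ B, ¬G.Adj a b) :
    cutMonomial K G A * cutMonomial K G B = cutMonomial K G (A ∪ B) * cutMonomial K G ∅ := by
  have hcut : ∀ e ∈ G.edgeSet, (IsCutEdge (A ∪ B) e ↔ IsCutEdge A e ∨ IsCutEdge B e) ∧
      ¬(IsCutEdge A e ∧ IsCutEdge B e) := by
    intro e he
    induction e using Sym2.ind with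
    | _ x y =>
      have hxy : G.Adj x y := he
      have hx : x ∈ A → x ∉ B := fun h => Set.disjoint_left.mp hAB h
      have hy : y ∈ A → y ∉ B := fun h => Set.disjoint_left.mp hAB h
      have hxy' : x ∈ A → y ∉ B := fun hx hy => hadj x hx y hy hxy
      have hyx : y ∈ A → x ∉ B := fun hy hx => hadj y hy x hx hxy.symm
      simp only [isCutEdge_mk_iff, Set.mem_union]
      tauto
  simp only [cutMonomial, ← Finset.prod_mul_distrib, not_isCutEdge_empty, if_false]
  refine Finset.prod_congr rfl fun e he => ?_
  obtain ⟨hunion, hboth⟩ := hcut e ((Set.toFinite _).mem_toFinset.mp he)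
  by_cases hA : IsCutEdge A e <;> by_cases hB : IsCutEdge B e <;> simp_all [mul_comm]

theorem _root_.MvPolynomial.X_mul_X_sub_X_mul_X_ne_zero {σ R : Type} [CommRing R] [Nontrivial R]
    {i j k l : σ} (hi : i ≠ l) (hj : j ≠ l) :
    X i * X j - X k * X l ≠ (0 : MvPolynomial σ R) := by
  intro h
  have := congrArg (eval fun m => if m = l then (0 : R) else 1) h
  simp [hi, hj] at this

lemma mk_ne_mk_empty {V : Type} {A : Set V} (hA : A.Nonempty) (hA' : A ≠ Set.univ) :
    (⟦A⟧ : Partition V) ≠ ⟦∅⟧ := by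
  intro h
  rcases Quotient.exact h with h | h
  · exact hA.ne_empty h.symm
  · exact hA' (Set.compl_empty_iff.mp h.symm)

theorem stmt9 {V : Type} [Fintype V] (K : Type) [Field K]
    (G : SimpleGraph V) (hconn : G.Connected) (hnc : G ≠ ⊤) :
    (∀ f ∈ cutIdeal K G, f.IsHomogeneous 1 → f = 0) ∧
    ∃ f ∈ cutIdeal K G, f ≠ 0 ∧ f.IsHomogeneous 2 := by
  refine ⟨fun f hf h1 => eq_zero_of_isHomogeneous_one_of_linearIndependent (phi K G)
    (linearIndependent_phi_X K hconn.preconnected) h1 hf, ?_⟩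
  obtain ⟨u, v, huv, hnadj⟩ := SimpleGraph.ne_top_iff_exists_not_adj.mp hnc
  have hsingleton {w w' : V} (hww' : w ≠ w') : (⟦{w}⟧ : Partition V) ≠ ⟦∅⟧ :=
    mk_ne_mk_empty (Set.singleton_nonempty w) fun h => hww' (h ▸ Set.mem_univ w').symm
  refine ⟨qPart K {u} * qPart K {v} - qPart K ({u} ∪ {v}) * qPart K ∅, ?_,
    X_mul_X_sub_X_mul_X_ne_zero (hsingleton huv) (hsingleton huv.symm), ?_⟩
  · change phi K G _ = 0
    simp only [map_sub, map_mul, phi_qPart, sub_eq_zero]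
    refine cutMonomial_mul_of_disjoint K G (Set.disjoint_singleton.mpr huv) ?_
    rintro a rfl b rfl
    exact hnadj
  · have hquad (A B : Set V) : (qPart K A * qPart K B).IsHomogeneous 2 :=
      (isHomogeneous_X K _).mul (isHomogeneous_X K _)
    exact (hquad _ _).sub (hquad _ _)

end CutPaper
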